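/- Let p be a partition of [k], let κ₁ < κ₂ < κ₃ < κ₄ be a crossing of p, and let a, b ∈ χ₀(p) be non-crossers with a ≠ b and a ∼_p b. Then either there exists j ∈ {1,2,3} with κ_j < a < κ_{j+1} and κ_j < b < κ_{j+1}, or both a and b lie outside the closed interval [κ₁, κ₄] (i.e. each of a and b is either < κ₁ or > κ₄). -/

import Mathlib

/-- The block relation of a finite partition of `Fin n` (partition of `[n]`):
`x ∼_p y` iff `x` and `y` lie in the same block of `p`. -/
def PartRel {n : ℕ} (p : Finpartition (Finset.univ : Finset (Fin n))) (x y : Fin n) : Prop :=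
  ∃ B ∈ p.parts, x ∈ B ∧ y ∈ B

/-- `κ` is a crossing of the relation `r`: `κ = {a,b,c,d}` with `a < b < c < d`,
`r a c`, `r b d`, and `¬ r a b`. -/
def IsCross {n : ℕ} (r : Fin n → Fin n → Prop) (κ : Finset (Fin n)) : Prop :=
  ∃ a b c d : Fin n, a < b ∧ b < c ∧ c < d ∧ κ = {a, b, c, d} ∧ r a c ∧ r b d ∧ ¬ r a b

/-- `cr p`: the set of crossings of the partition `p`. -/
def cr {n : ℕ} (p : Finpartition (Finset.univ : Finset (Fin n))) : Set (Finset (Fin n)) :=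
  {κ | IsCross (PartRel p) κ}


/-- `crossers p` (`χ(p)`): the union of all crossings of `p`. -/
def crossers {n : ℕ} (p : Finpartition (Finset.univ : Finset (Fin n))) : Set (Fin n) :=
  {x | ∃ κ ∈ cr p, x ∈ κ}

/-!
If `a` is a non-crosser with `a ∼ b`, then every other block meets the open interval between
`a` and `b` in both or neither of any two of its elements: one element inside and its partner
outside would form a crossing containing `a`. This extends from the arcs starting at `a` to any
two elements `y, y'` of the block of `a`, because away from the endpoints the interval between
`y` and `y'` is the symmetric difference of the intervals from `a` to `y` and from `a` to `y'`;
in particular the block of a non-crosser contains no crosser. So `a` is not in the block of `κ₁`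
or of `κ₂`, and the interval between `a` and `b` contains both or neither of `κ₁, κ₃` and both
or neither of `κ₂, κ₄`, which forces one of the listed configurations.
-/

open Set

theorem mem_uIoo_iff_xor {α : Type*} [LinearOrder α] {a y y' t : α} (ha : t ≠ a) (hy : t ≠ y)
    (hy' : t ≠ y') : t ∈ uIoo y y' ↔ Xor (t ∈ uIoo a y) (t ∈ uIoo a y') := by
  simp only [uIoo_eq_union, mem_union, mem_Ioo, Xor]
  grind

theorem same_gap_of_mem_uIoo_iff {α : Type*} [LinearOrder α] {κ₁ κ₂ κ₃ κ₄ a b : α}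
    (h12 : κ₁ < κ₂) (h23 : κ₂ < κ₃) (h34 : κ₃ < κ₄)
    (ha : a ∉ ({κ₁, κ₂, κ₃, κ₄} : Finset α)) (hb : b ∉ ({κ₁, κ₂, κ₃, κ₄} : Finset α))
    (h13 : κ₁ ∈ uIoo a b ↔ κ₃ ∈ uIoo a b) (h24 : κ₂ ∈ uIoo a b ↔ κ₄ ∈ uIoo a b) :
    (κ₁ < a ∧ a < κ₂ ∧ κ₁ < b ∧ b < κ₂) ∨
    (κ₂ < a ∧ a < κ₃ ∧ κ₂ < b ∧ b < κ₃) ∨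
    (κ₃ < a ∧ a < κ₄ ∧ κ₃ < b ∧ b < κ₄) ∨
    ((a < κ₁ ∨ κ₄ < a) ∧ (b < κ₁ ∨ κ₄ < b)) := by
  simp only [uIoo_eq_union, mem_union, mem_Ioo, Finset.mem_insert, Finset.mem_singleton,
    not_or] at *
  grind

variable {n : ℕ} {p : Finpartition (Finset.univ : Finset (Fin n))}

namespace PartRel

variable {x y z : Fin n}

theorem refl (x : Fin n) : PartRel p x x :=
  let ⟨B, hB, hx⟩ := p.exists_mem (Finset.mem_univ x)
  ⟨B, hB, hx, hx⟩

theorem symm (h : PartRel p x y) : PartRel p y x :=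
  let ⟨B, hB, hx, hy⟩ := h
  ⟨B, hB, hy, hx⟩

theorem trans (h : PartRel p x y) (h' : PartRel p y z) : PartRel p x z := by
  obtain ⟨B, hB, hx, hy⟩ := h
  obtain ⟨B', hB', hy', hz⟩ := h'
  exact ⟨B, hB, hx, p.eq_of_mem_parts hB hB' hy hy' ▸ hz⟩

end PartRel

variable {a b c d x y z w y' : Fin n}

theorem mem_crossers_of_crossing (hxy : x < y) (hyz : y < z) (hzw : z < w)
    (hxz : PartRel p x z) (hyw : PartRel p y w) (hnxy : ¬ PartRel p x y) {t : Fin n}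
    (ht : t ∈ ({x, y, z, w} : Finset (Fin n))) : t ∈ crossers p :=
  ⟨_, ⟨x, y, z, w, hxy, hyz, hzw, rfl, hxz, hyw, hnxy⟩, ht⟩

theorem mem_uIoo_of_notMem_crossers (ha : a ∉ crossers p) (hab : PartRel p a b)
    (hcd : PartRel p c d) (hac : ¬ PartRel p a c) (hc : c ∈ uIoo a b) : d ∈ uIoo a b := by
  have hda : d ≠ a := by rintro rfl; exact hac hcd.symm
  have hdb : d ≠ b := by rintro rfl; exact hac (hab.trans hcd.symm)
  have hnd : ¬ PartRel p d a := fun h => hac (hcd.trans h).symm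
  have hnb : ¬ PartRel p b c := fun h => hac (hab.trans h)
  by_contra hd
  have hpos : (a < c ∧ c < b ∧ (d < a ∨ b < d)) ∨ (b < c ∧ c < a ∧ (d < b ∨ a < d)) := by
    simp only [uIoo_eq_union, mem_union, mem_Ioo] at hc hd
    grind
  rcases hpos with ⟨hac', hcb, hda' | hbd⟩ | ⟨hbc, hca, hdb' | had⟩
  · exact ha (mem_crossers_of_crossing hda' hac' hcb hcd.symm hab hnd (by simp))
  · exact ha (mem_crossers_of_crossing hac' hcb hbd hab hcd hac (by simp))
  · exact ha (mem_crossers_of_crossing hdb' hbc hca hcd.symm hab.symm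
      (fun h => hnd (h.trans hab.symm)) (by simp))
  · exact ha (mem_crossers_of_crossing hbc hca had hab.symm hcd hnb (by simp))

theorem mem_uIoo_iff_of_notMem_crossers (ha : a ∉ crossers p) (hy : PartRel p a y)
    (hy' : PartRel p a y') (hcd : PartRel p c d) (hac : ¬ PartRel p a c) :
    c ∈ uIoo y y' ↔ d ∈ uIoo y y' := by
  have had : ¬ PartRel p a d := fun h => hac (h.trans hcd.symm)
  have hne : ∀ t, ¬ PartRel p a t → t ≠ a ∧ t ≠ y ∧ t ≠ y' := by
    rintro t ht
    refine ⟨?_, ?_, ?_⟩ <;> rintro rfl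
    exacts [ht (.refl t), ht hy, ht hy']
  obtain ⟨hca, hcy, hcy'⟩ := hne c hac
  obtain ⟨hda, hdy, hdy'⟩ := hne d had
  have hy₁ : c ∈ uIoo a y ↔ d ∈ uIoo a y :=
    ⟨mem_uIoo_of_notMem_crossers ha hy hcd hac, mem_uIoo_of_notMem_crossers ha hy hcd.symm had⟩
  have hy₂ : c ∈ uIoo a y' ↔ d ∈ uIoo a y' :=
    ⟨mem_uIoo_of_notMem_crossers ha hy' hcd hac, mem_uIoo_of_notMem_crossers ha hy' hcd.symm had⟩
  rw [mem_uIoo_iff_xor hca hcy hcy', mem_uIoo_iff_xor hda hdy hdy', hy₁, hy₂]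

theorem notMem_crossers_of_partRel (ha : a ∉ crossers p) (hab : PartRel p a b) :
    b ∉ crossers p := by
  rintro ⟨_, ⟨x, y, z, w, hxy, hyz, hzw, rfl, hxz, hyw, hnxy⟩, hb⟩
  have hax_or_hay : PartRel p a x ∨ PartRel p a y := by
    simp only [Finset.mem_insert, Finset.mem_singleton] at hb
    rcases hb with rfl | rfl | rfl | rfl
    exacts [.inl hab, .inr hab, .inl (hab.trans hxz.symm), .inr (hab.trans hyw.symm)]
  rcases hax_or_hay with hax | hay
  · have h := mem_uIoo_iff_of_notMem_crossers ha hax (hax.trans hxz) hyw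
      (fun h => hnxy (hax.symm.trans h))
    rw [uIoo_of_lt (hxy.trans hyz)] at h
    exact lt_asymm (h.1 ⟨hxy, hyz⟩).2 hzw
  · have h := mem_uIoo_iff_of_notMem_crossers ha hay (hay.trans hyw) hxz.symm
      (fun h => hnxy (hxz.trans (hay.symm.trans h).symm))
    rw [uIoo_of_lt (hyz.trans hzw)] at h
    exact lt_asymm (h.1 ⟨hyz, hzw⟩).1 hxy

theorem stmt2_general {k : ℕ} (p : Finpartition (Finset.univ : Finset (Fin k)))
    (κ₁ κ₂ κ₃ κ₄ : Fin k) (h12 : κ₁ < κ₂) (h23 : κ₂ < κ₃) (h34 : κ₃ < κ₄)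
    (h13 : PartRel p κ₁ κ₃) (h24 : PartRel p κ₂ κ₄) (hn12 : ¬ PartRel p κ₁ κ₂)
    (a b : Fin k) (ha : a ∉ crossers p) (hb : b ∉ crossers p)
    (hrel : PartRel p a b) :
    (κ₁ < a ∧ a < κ₂ ∧ κ₁ < b ∧ b < κ₂) ∨
    (κ₂ < a ∧ a < κ₃ ∧ κ₂ < b ∧ b < κ₃) ∨
    (κ₃ < a ∧ a < κ₄ ∧ κ₃ < b ∧ b < κ₄) ∨
    ((a < κ₁ ∨ κ₄ < a) ∧ (b < κ₁ ∨ κ₄ < b)) := by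
  have hκ : ∀ t ∈ ({κ₁, κ₂, κ₃, κ₄} : Finset (Fin k)), t ∈ crossers p :=
    fun t ht => mem_crossers_of_crossing h12 h23 h34 h13 h24 hn12 ht
  have hn1 : ¬ PartRel p a κ₁ := fun h => notMem_crossers_of_partRel ha h (hκ κ₁ (by simp))
  have hn2 : ¬ PartRel p a κ₂ := fun h => notMem_crossers_of_partRel ha h (hκ κ₂ (by simp))
  exact same_gap_of_mem_uIoo_iff h12 h23 h34 (fun h => ha (hκ a h)) (fun h => hb (hκ b h))
    (mem_uIoo_iff_of_notMem_crossers ha (.refl a) hrel h13 hn1)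
    (mem_uIoo_iff_of_notMem_crossers ha (.refl a) hrel h24 hn2)

/-- if `κ₁ < κ₂ < κ₃ < κ₄` is a crossing of `p` and `a ≠ b` are
non-crossers with `a ∼_p b`, then either `a` and `b` lie strictly between two
consecutive elements of the crossing, or both lie outside `[κ₁, κ₄]`. -/
theorem stmt2 {k : ℕ} (p : Finpartition (Finset.univ : Finset (Fin k)))
    (κ₁ κ₂ κ₃ κ₄ : Fin k) (h12 : κ₁ < κ₂) (h23 : κ₂ < κ₃) (h34 : κ₃ < κ₄)
    (h13 : PartRel p κ₁ κ₃) (h24 : PartRel p κ₂ κ₄) (hn12 : ¬ PartRel p κ₁ κ₂)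
    (a b : Fin k) (ha : a ∉ crossers p) (hb : b ∉ crossers p)
    (hab : a ≠ b) (hrel : PartRel p a b) :
    (κ₁ < a ∧ a < κ₂ ∧ κ₁ < b ∧ b < κ₂) ∨
    (κ₂ < a ∧ a < κ₃ ∧ κ₂ < b ∧ b < κ₃) ∨
    (κ₃ < a ∧ a < κ₄ ∧ κ₃ < b ∧ b < κ₄) ∨
    ((a < κ₁ ∨ κ₄ < a) ∧ (b < κ₁ ∨ κ₄ < b)) :=
  stmt2_general p κ₁ κ₂ κ₃ κ₄ h12 h23 h34 h13 h24 hn12 a b ha hb hrel
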